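/- arXiv:1403.7014 — 5 statements merged into one kernel-verified Lean document; each statement's English description precedes it below -/
import Mathlib

section
/- Let G1, G2, GT be commutative groups and let e : G1 → G2 → GT be bilinear. Let g1, h, A ∈ G1, g2 ∈ G2, and let γ, x, y be integers with W := g2^γ and A^{γ+x} = g1·h^{-y}. For any integers β, r_x, r_δ, r_β, c, define T := A·h^β, δ := β·x − y, R := e(h,g2)^{r_δ} · e(h,W)^{r_β} · e(T,g2)^{−r_x}, s_x := r_x + c·x, s_δ := r_δ + c·δ, and s_β := r_β + c·β. Then e(h,g2)^{s_δ} · e(h,W)^{s_β} · e(T,g2)^{−s_x} · (e(T,W) · e(g1,g2)^{−1})^{−c} = R. Consequently, for any hash function H3, an honestly generated group signature σ = (T, c, s_x, s_δ, s_β) with c := H3(gpk, T, R, M) passes the Verify algorithm, i.e., the scheme is correct. -/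
/-- Correctness of the open-free group signature scheme:
an honestly generated signature satisfies the verification equation, hence
passes the Verify algorithm for any hash function `H3`. -/
theorem openFreeGS_correctness
    (G1 G2 GT : Type*) [CommGroup G1] [CommGroup G2] [CommGroup GT]
    (e : G1 → G2 → GT)
    (hbl : ∀ (a a' : G1) (b : G2), e (a * a') b = e a b * e a' b)
    (hbr : ∀ (a : G1) (b b' : G2), e a (b * b') = e a b * e a b')
    (g1 h A : G1) (g2 W : G2) (γ x y : ℤ)
    (hW : W = g2 ^ γ)
    (hA : A ^ (γ + x) = g1 * h ^ (-y))
    (β rx rδ rβ c : ℤ)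
    (T : G1) (hT : T = A * h ^ β)
    (δ : ℤ) (hδ : δ = β * x - y)
    (R : GT) (hR : R = e h g2 ^ rδ * e h W ^ rβ * e T g2 ^ (-rx))
    (sx sδ sβ : ℤ)
    (hsx : sx = rx + c * x) (hsδ : sδ = rδ + c * δ) (hsβ : sβ = rβ + c * β)
    (Gpk Msg : Type*) (gpk : Gpk) (M : Msg)
    (H3 : Gpk → G1 → GT → Msg → ℤ)
    (hc : c = H3 gpk T R M) :
    e h g2 ^ sδ * e h W ^ sβ * e T g2 ^ (-sx) *
        (e T W * (e g1 g2)⁻¹) ^ (-c) = R ∧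
    c = H3 gpk T
        (e h g2 ^ sδ * e h W ^ sβ * e T g2 ^ (-sx) *
          (e T W * (e g1 g2)⁻¹) ^ (-c)) M := by
  have hl : ∀ (m : ℤ) (a : G1) (b : G2), e (a ^ m) b = e a b ^ m := fun m a b =>
    map_zpow (MonoidHom.mk' (fun a => e a b) (fun a a' => hbl a a' b)) a m
  have hml : ∀ (a a' : G1) (b : G2), e (a * a') b = e a b * e a' b := hbl
  have hr : ∀ (m : ℤ) (a : G1) (b : G2), e a (b ^ m) = e a b ^ m := fun m a b =>
    map_zpow (MonoidHom.mk' (fun b => e a b) (fun b b' => hbr a b b')) b m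
  have hg1 : g1 = A ^ (γ + x) * h ^ y := by rw [hA]; group
  have key : e h g2 ^ sδ * e h W ^ sβ * e T g2 ^ (-sx) *
      (e T W * (e g1 g2)⁻¹) ^ (-c) = R := by
    subst hW hT hδ hR hsx hsδ hsβ hg1
    simp only [hl, hr, hbl, hbr, mul_zpow, ← zpow_mul, ← zpow_add, inv_zpow, ← zpow_neg]
    set u := e A g2
    set v := e h g2
    have norm : ∀ (a b c d e' f g : ℤ),
        v ^ a * (u ^ b * v ^ c) * (u ^ d * v ^ e' * (u ^ f * v ^ g)⁻¹)
          = u ^ (b + d + -f) * v ^ (a + c + e' + -g) := by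
      intros
      simp only [zpow_add, zpow_neg, mul_inv]
      ac_rfl
    have norm2 : ∀ (a b c : ℤ), v ^ a * (u ^ b * v ^ c) = u ^ b * v ^ (a + c) := by
      intros
      simp only [zpow_add]
      ac_rfl
    rw [norm, norm2]
    congr 1
    · congr 1; ring
    · congr 1; ring
  exact ⟨key, by rw [key, hc]⟩
end

section
/- Let p be a prime, let G1, G2, GT be commutative groups such that every element a ∈ GT satisfies a^p = 1, and let e : G1 → G2 → GT be bilinear. Let g1, h, T ∈ G1, g2, W ∈ G2, and let c, c', s_x, s'_x, s_δ, s'_δ, s_β, s'_β, u be integers with (c − c')·u ≡ 1 (mod p). Suppose that e(h,g2)^{s_δ − s'_δ} · e(h,W)^{s_β − s'_β} · e(T,g2)^{−(s_x − s'_x)} = (e(T,W) · e(g1,g2)^{−1})^{c − c'}. Define x̃ := (s_x − s'_x)·u, β̃ := (s_β − s'_β)·u, and ỹ := ((s_x − s'_x)(s_β − s'_β) − (s_δ − s'_δ)(c − c'))·u². Then e(T,W) · e(g1,g2)^{−1} = e(h,g2)^{β̃·x̃ − ỹ} · e(h,W)^{β̃} · e(T,g2)^{−x̃}. -/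
/-- Dividing the exponents of the two-transcript quotient equation
by `c − c'` (via an integer `u` with `(c − c')·u ≡ 1 (mod p)`) yields the
pairing equation satisfied by the extracted values `x̃, ỹ, β̃`. -/
theorem openFreeGS_extraction_divided_equation
    (p : ℕ) (hp : p.Prime)
    (G1 G2 GT : Type*) [CommGroup G1] [CommGroup G2] [CommGroup GT]
    (hexp : ∀ a : GT, a ^ p = 1)
    (e : G1 → G2 → GT)
    (hbl : ∀ (a a' : G1) (b : G2), e (a * a') b = e a b * e a' b)
    (hbr : ∀ (a : G1) (b b' : G2), e a (b * b') = e a b * e a b')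
    (g1 h T : G1) (g2 W : G2)
    (c c' sx sx' sδ sδ' sβ sβ' u : ℤ)
    (hu : (c - c') * u ≡ 1 [ZMOD (p : ℤ)])
    (heq : e h g2 ^ (sδ - sδ') * e h W ^ (sβ - sβ') * e T g2 ^ (-(sx - sx')) =
      (e T W * (e g1 g2)⁻¹) ^ (c - c')) :
    e T W * (e g1 g2)⁻¹ =
      e h g2 ^ (((sx - sx') * u) * ((sβ - sβ') * u)
          - ((sx - sx') * (sβ - sβ') - (sδ - sδ') * (c - c')) * u ^ 2) *
        e h W ^ ((sβ - sβ') * u) *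
        e T g2 ^ (-((sx - sx') * u)) := by
  -- exponents in GT may be reduced modulo p
  have key : ∀ (a : GT) (m n : ℤ), m ≡ n [ZMOD (p : ℤ)] → a ^ m = a ^ n := by
    intro a m n hmn
    obtain ⟨k, hk⟩ := hmn.dvd
    rw [show m = n + (p : ℤ) * (-k) from by linarith, zpow_add, zpow_mul,
      zpow_natCast, hexp a, one_zpow, mul_one]
  set k : ℤ := (c - c') * u * u with hkdef
  have h1 : e h g2 ^ (((sx - sx') * u) * ((sβ - sβ') * u)
      - ((sx - sx') * (sβ - sβ') - (sδ - sδ') * (c - c')) * u ^ 2)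
      = e h g2 ^ ((sδ - sδ') * k) := by
    congr 1; ring
  have h2 : e h W ^ ((sβ - sβ') * u) = e h W ^ ((sβ - sβ') * k) := by
    refine key _ _ _ ?_
    calc (sβ - sβ') * u = (sβ - sβ') * u * 1 := by ring
      _ ≡ (sβ - sβ') * u * ((c - c') * u) [ZMOD (p : ℤ)] :=
          (Int.ModEq.mul_left _ hu).symm
      _ = (sβ - sβ') * k := by ring
  have h3 : e T g2 ^ (-((sx - sx') * u)) = e T g2 ^ (-(sx - sx') * k) := by
    refine key _ _ _ ?_
    calc -((sx - sx') * u) = -((sx - sx') * u) * 1 := by ring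
      _ ≡ -((sx - sx') * u) * ((c - c') * u) [ZMOD (p : ℤ)] :=
          (Int.ModEq.mul_left _ hu).symm
      _ = -(sx - sx') * k := by ring
  have hk1 : (c - c') * k ≡ 1 [ZMOD (p : ℤ)] := by
    calc (c - c') * k = ((c - c') * u) * ((c - c') * u) := by ring
      _ ≡ 1 * 1 [ZMOD (p : ℤ)] := hu.mul hu
      _ = 1 := by ring
  rw [h1, h2, h3]
  calc e T W * (e g1 g2)⁻¹
      = (e T W * (e g1 g2)⁻¹) ^ (1 : ℤ) := (zpow_one _).symm
    _ = (e T W * (e g1 g2)⁻¹) ^ ((c - c') * k) := (key _ _ _ hk1).symm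
    _ = ((e T W * (e g1 g2)⁻¹) ^ (c - c')) ^ k := by rw [zpow_mul]
    _ = (e h g2 ^ (sδ - sδ') * e h W ^ (sβ - sβ') * e T g2 ^ (-(sx - sx'))) ^ k := by
        rw [heq]
    _ = e h g2 ^ ((sδ - sδ') * k) * e h W ^ ((sβ - sβ') * k)
          * e T g2 ^ (-(sx - sx') * k) := by
        rw [mul_zpow, mul_zpow, ← zpow_mul, ← zpow_mul, ← zpow_mul]
end

section
/- Let p be a prime, let G1, G2, GT be commutative groups such that every element a ∈ GT satisfies a^p = 1, and let e : G1 → G2 → GT be bilinear. Let g1, h, T ∈ G1, g2, W ∈ G2, R ∈ GT, and suppose (c, s_x, s_δ, s_β) and (c', s'_x, s'_δ, s'_β) are two tuples of integers that are both accepting transcripts for (T, R), and u is an integer with (c − c')·u ≡ 1 (mod p). Define x̃ := (s_x − s'_x)·u, β̃ := (s_β − s'_β)·u, ỹ := ((s_x − s'_x)(s_β − s'_β) − (s_δ − s'_δ)(c − c'))·u², and Ã := T·h^{−β̃}. Then e(Ã, g2^{x̃}·W) = e(g1, g2) · e(h, g2)^{−ỹ}. (This is the knowledge-extraction property of the open-free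 group signature: from any two accepting transcripts with distinct challenges modulo p one extracts a triple (x̃, ỹ, Ã) satisfying the pairing equation characterizing valid signing keys.) -/
private lemma ofMul_eq' {G : Type*} [CommGroup G] {x y : G}
    (h : Additive.ofMul x = Additive.ofMul y) : x = y := h

private lemma pow_congr_of_exp' {GT : Type*} [CommGroup GT] (p : ℕ)
    (hexp : ∀ a : GT, a ^ p = 1) (a : GT) {m n : ℤ}
    (hmn : m ≡ n [ZMOD (p : ℤ)]) : a ^ m = a ^ n := by
  obtain ⟨k, hk⟩ := Int.ModEq.dvd hmn
  have hp1 : a ^ (p : ℤ) = 1 := by rw [zpow_natCast, hexp]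
  have : m = n + p * (-k) := by linarith
  rw [this, zpow_add, zpow_mul, hp1, one_zpow, mul_one]

/-- Knowledge extraction for the open-free group signature:
from two accepting transcripts for `(T, R)` with challenges `c ≠ c'` mod `p`
(witnessed by `u` with `(c − c')·u ≡ 1 (mod p)`), the extracted triple
`(xt, yt, At)` with `At = T·h^(−βt)` satisfies the pairing equation
`e(At, g2^xt · W) = e(g1, g2) · e(h, g2)^(−yt)` characterizing valid signing keys. -/
theorem openFreeGS_knowledge_extraction
    (p : ℕ) (hp : p.Prime)
    (G1 G2 GT : Type*) [CommGroup G1] [CommGroup G2] [CommGroup GT]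
    (hexp : ∀ a : GT, a ^ p = 1)
    (e : G1 → G2 → GT)
    (hbl : ∀ (a a' : G1) (b : G2), e (a * a') b = e a b * e a' b)
    (hbr : ∀ (a : G1) (b b' : G2), e a (b * b') = e a b * e a b')
    (g1 h T : G1) (g2 W : G2) (R : GT)
    (c sx sδ sβ c' sx' sδ' sβ' u : ℤ)
    (hacc : e h g2 ^ sδ * e h W ^ sβ * e T g2 ^ (-sx) *
        (e T W * (e g1 g2)⁻¹) ^ (-c) = R)
    (hacc' : e h g2 ^ sδ' * e h W ^ sβ' * e T g2 ^ (-sx') *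
        (e T W * (e g1 g2)⁻¹) ^ (-c') = R)
    (hu : (c - c') * u ≡ 1 [ZMOD (p : ℤ)])
    (xt βt yt : ℤ)
    (hx : xt = (sx - sx') * u)
    (hβ : βt = (sβ - sβ') * u)
    (hy : yt = ((sx - sx') * (sβ - sβ') - (sδ - sδ') * (c - c')) * u ^ 2)
    (At : G1) (hAt : At = T * h ^ (-βt)) :
    e At (g2 ^ xt * W) = e g1 g2 * e h g2 ^ (-yt) := by
  have hl : ∀ (a : G1) (b : G2) (n : ℤ), e (a ^ n) b = e a b ^ n := fun a b n =>
    (MonoidHom.mk' (fun x => e x b) (fun x y => hbl x y b)).map_zpow a n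
  have hr : ∀ (a : G1) (b : G2) (n : ℤ), e a (b ^ n) = e a b ^ n := fun a b n =>
    (MonoidHom.mk' (fun y => e a y) (fun x y => hbr a x y)).map_zpow b n
  have h2 : e h g2 ^ sδ * e h W ^ sβ * e T g2 ^ (-sx) * (e T W * (e g1 g2)⁻¹) ^ (-c)
      = e h g2 ^ sδ' * e h W ^ sβ' * e T g2 ^ (-sx') * (e T W * (e g1 g2)⁻¹) ^ (-c') :=
    hacc.trans hacc'.symm
  -- step 1: quotient of the two transcripts
  have h3 : (e T W * (e g1 g2)⁻¹) ^ (c' - c)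
      = e h g2 ^ (sδ' - sδ) * e h W ^ (sβ' - sβ) * e T g2 ^ (sx - sx') := by
    apply ofMul_eq'
    have h2' := congrArg Additive.ofMul h2
    simp only [ofMul_mul, ofMul_zpow, ofMul_inv] at h2' ⊢
    linear_combination (norm := module) h2'
  -- step 2: raise to the power (-u)
  have h4 : (e T W * (e g1 g2)⁻¹) ^ ((c' - c) * (-u))
      = e h g2 ^ ((sδ' - sδ) * (-u)) * e h W ^ ((sβ' - sβ) * (-u))
        * e T g2 ^ ((sx - sx') * (-u)) := by
    rw [zpow_mul, h3, mul_zpow, mul_zpow, ← zpow_mul, ← zpow_mul, ← zpow_mul]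
  -- step 3: exponent-p hypothesis and the inverse u
  have h5 : (e T W * (e g1 g2)⁻¹) ^ ((c' - c) * (-u)) = e T W * (e g1 g2)⁻¹ := by
    have hmod : (c' - c) * (-u) ≡ 1 [ZMOD (p : ℤ)] := by
      have heq : (c' - c) * (-u) = (c - c') * u := by ring
      rw [heq]; exact hu
    rw [pow_congr_of_exp' p hexp _ hmod, zpow_one]
  have hDval : e T W * (e g1 g2)⁻¹
      = e h g2 ^ ((sδ' - sδ) * (-u)) * e h W ^ ((sβ' - sβ) * (-u))
        * e T g2 ^ ((sx - sx') * (-u)) := by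
    rw [← h4, h5]
  -- step 4: reduce the exponent of A mod p
  have hy2 : e h g2 ^ (-yt)
      = e h g2 ^ ((sδ - sδ') * u - ((sβ - sβ') * u) * ((sx - sx') * u)) := by
    apply pow_congr_of_exp' p hexp
    have h6 : (sδ - sδ') * u * ((c - c') * u) ≡ (sδ - sδ') * u * 1 [ZMOD (p : ℤ)] :=
      hu.mul_left _
    calc -yt = (sδ - sδ') * u * ((c - c') * u)
          - ((sβ - sβ') * u) * ((sx - sx') * u) := by rw [hy]; ring
      _ ≡ (sδ - sδ') * u * 1 - ((sβ - sβ') * u) * ((sx - sx') * u) [ZMOD (p : ℤ)] :=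
          h6.sub_right _
      _ = (sδ - sδ') * u - ((sβ - sβ') * u) * ((sx - sx') * u) := by ring
  -- step 5: expand the goal and combine everything
  simp only [hAt, hbr, hbl, hl, hr]
  apply ofMul_eq'
  have hDval' := congrArg Additive.ofMul hDval
  have hy2' := congrArg Additive.ofMul hy2
  simp only [ofMul_mul, ofMul_zpow, ofMul_inv] at hDval' hy2' ⊢
  rw [hx, hβ]
  linear_combination (norm := module) hDval' - hy2'
end

section
/- Let G1, G2, GT be commutative groups and let e : G1 → G2 → GT be bilinear and non-degenerate in its first argument with respect to g2, in the sense that for all a ∈ G1, e(a, g2) = 1 implies a = 1. Let g1, h, Ã ∈ G1, g2 ∈ G2, let γ, x̃, ỹ be integers, and set W := g2^γ. If e(Ã, g2^{x̃}·W) = e(g1, g2) · e(h, g2)^{−ỹ}, then Ã^{γ + x̃} = g1 · h^{−ỹ}. (Hence the triple (x̃, ỹ, Ã) extracted from two accepting transcripts is a valid signing key of the open-free group signature scheme, of exactly the form produced by GS.Join.) -/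
/-- If `e` is bilinear and non-degenerate in its first argument
with respect to `g2`, then the extracted triple `(xt, yt, At)` satisfying the
pairing equation `e(At, g2^xt · W) = e(g1, g2) · e(h, g2)^(−yt)` (with `W = g2^γ`)
is a valid signing key: `At^(γ + xt) = g1 · h^(−yt)`. -/
theorem openFreeGS_extracted_key_is_valid
    (G1 G2 GT : Type*) [CommGroup G1] [CommGroup G2] [CommGroup GT]
    (e : G1 → G2 → GT)
    (hbl : ∀ (a a' : G1) (b : G2), e (a * a') b = e a b * e a' b)
    (hbr : ∀ (a : G1) (b b' : G2), e a (b * b') = e a b * e a b')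
    (g2 : G2)
    (hnd : ∀ a : G1, e a g2 = 1 → a = 1)
    (g1 h At : G1) (γ xt yt : ℤ) (W : G2) (hW : W = g2 ^ γ)
    (heq : e At (g2 ^ xt * W) = e g1 g2 * e h g2 ^ (-yt)) :
    At ^ (γ + xt) = g1 * h ^ (-yt) := by
  have hl : ∀ (a : G1) (m : ℤ) (b : G2), e (a ^ m) b = e a b ^ m := by
    intro a m b
    have h1 : e (1 : G1) b = 1 := by
      have := hbl 1 1 b
      rw [mul_one] at this
      exact (right_eq_mul.mp this)
    let f : G1 →* GT := ⟨⟨fun x => e x b, h1⟩, fun x y => hbl x y b⟩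
    exact map_zpow f a m
  have hr : ∀ (a : G1) (m : ℤ) (b : G2), e a (b ^ m) = e a b ^ m := by
    intro a m b
    have h1 : e a (1 : G2) = 1 := by
      have := hbr a 1 1
      rw [mul_one] at this
      exact (right_eq_mul.mp this)
    let f : G2 →* GT := ⟨⟨fun y => e a y, h1⟩, fun x y => hbr a x y⟩
    exact map_zpow f b m
  have key : e (At ^ (γ + xt)) g2 = e (g1 * h ^ (-yt)) g2 := by
    rw [hl, hbl, hl]
    have : e At g2 ^ (γ + xt) = e At (g2 ^ xt * g2 ^ γ) := by
      rw [hbr, hr, hr, ← zpow_add, add_comm]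
    rw [this, ← hW, heq]
  have := hnd (At ^ (γ + xt) * (g1 * h ^ (-yt))⁻¹) (by
    rw [hbl, key]
    have h1 : e (1 : G1) g2 = 1 := by
      have := hbl 1 1 g2
      rw [mul_one] at this
      exact (right_eq_mul.mp this)
    have : e ((g1 * h ^ (-yt)) * (g1 * h ^ (-yt))⁻¹) g2 = 1 := by
      rw [mul_inv_cancel]; exact h1
    rw [hbl] at this
    exact this)
  exact mul_inv_eq_one.mp this
end

section
/- Let p be a prime. Let G1 be a finite commutative group of cardinality p, let h ∈ G1 with h ≠ 1, and let G2, GT be commutative groups in which every element a satisfies a^p = 1. Let e : G1 → G2 → GT be bilinear. Fix g1, A ∈ G1, g2 ∈ G2 and γ, x, y ∈ ZMod p, set W := g2^γ, and suppose A^{γ+x} = g1 · h^{−y} (exponents taken via representatives modulo p). Define the real transcript distribution as the pushforward of the uniform distribution on (ZMod p)^5 (sampling β, r_x, r_δ, r_β, c) under the map sending (β, r_x, r_δ, r_β, c) to (T, R, c, s_x, s_δ, s_β), where T := A·h^β, δ := β·x − y, R := e(h,g2)^{r_δ} · e(h,W)^{r_β} · e(T,g2)^{−r_x}, s_x := r_x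 + c·x, s_δ := r_δ + c·δ, s_β := r_β + c·β. Define the simulated transcript distribution as the pushforward of the uniform distribution on G1 × (ZMod p)^4 (sampling T, c, s_x, s_δ, s_β) under the map sending (T, c, s_x, s_δ, s_β) to (T, R', c, s_x, s_δ, s_β), where R' := e(h,g2)^{s_δ} · e(h,W)^{s_β} · e(T,g2)^{−s_x} · (e(T,W) · e(g1,g2)^{−1})^{−c}. Then the real and simulated distributions on G1 × GT × (ZMod p)^4 are equal. (This is perfect honest-verifier zero knowledge of the underlying 3-move protocol of the open-free group signature scheme, which yields its anonymity.) -/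
set_option linter.unusedSectionVars false
section Helpers
variable {M : Type*} [CommGroup M] {p : ℕ} [NeZero p]

private lemma zpmod (a : M) (ha : a ^ p = 1) (k : ℕ) : a ^ k = a ^ (k % p) := by
  conv_lhs => rw [← Nat.mod_add_div k p, pow_add, pow_mul, ha, one_pow, mul_one]

private lemma zpadd (a : M) (ha : a ^ p = 1) (m n : ZMod p) :
    a ^ (m + n).val = a ^ m.val * a ^ n.val := by
  rw [ZMod.val_add, ← zpmod a ha, pow_add]

private lemma zpneg (a : M) (ha : a ^ p = 1) (m : ZMod p) :
    a ^ (-m).val = (a ^ m.val)⁻¹ := by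
  refine eq_inv_of_mul_eq_one_left ?_
  rw [← zpadd a ha, neg_add_cancel, ZMod.val_zero, pow_zero]

private lemma zpmul (a : M) (ha : a ^ p = 1) (m n : ZMod p) :
    a ^ (m * n).val = (a ^ m.val) ^ n.val := by
  rw [← pow_mul, ZMod.val_mul, ← zpmod a ha]

private lemma zpF (a b : M) (ha : a ^ p = 1) (hb : b ^ p = 1) (γ β : ZMod p)
    (m1 m2 m3 : ZMod p) :
    a ^ m1.val * (a ^ γ.val) ^ m2.val * ((b * a ^ β.val) ^ m3.val)⁻¹ =
      a ^ (m1 + γ * m2 - β * m3).val * b ^ (-m3).val := by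
  rw [← zpmul a ha, mul_pow, mul_inv, ← zpmul a ha, ← zpneg a ha, ← zpneg b hb,
    show m1 + γ * m2 - β * m3 = m1 + γ * m2 + -(β * m3) by ring,
    zpadd a ha, zpadd a ha]
  simp [mul_comm, mul_assoc, mul_left_comm]

private lemma zpkey (a b : M) (ha : a ^ p = 1) (hb : b ^ p = 1)
    (γ x y β rx rδ rβ c : ZMod p) :
    a ^ rδ.val * (a ^ γ.val) ^ rβ.val * ((b * a ^ β.val) ^ rx.val)⁻¹ =
      a ^ (rδ + c * (β * x - y)).val * (a ^ γ.val) ^ (rβ + c * β).val *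
        ((b * a ^ β.val) ^ (rx + c * x).val)⁻¹ *
        ((b ^ γ.val * (a ^ γ.val) ^ β.val * (b ^ (γ + x).val * a ^ y.val)⁻¹) ^ c.val)⁻¹ := by
  have hInner : b ^ γ.val * (a ^ γ.val) ^ β.val * (b ^ (γ + x).val * a ^ y.val)⁻¹ =
      a ^ (γ * β - y).val * b ^ (-x).val := by
    rw [← zpmul a ha, mul_inv, ← zpneg a ha, ← zpneg b hb,
      show γ * β - y = γ * β + -y by ring,
      show (-x : ZMod p) = γ + -(γ + x) by ring, zpadd a ha, zpadd b hb]
    simp [mul_comm, mul_assoc, mul_left_comm]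
  rw [zpF a b ha hb, zpF a b ha hb, hInner, mul_pow, ← zpmul a ha, ← zpmul b hb,
    mul_inv, ← zpneg a ha, ← zpneg b hb]
  rw [show -((-x) * c) = x * c by ring]
  calc a ^ (rδ + γ * rβ - β * rx).val * b ^ (-rx).val
      = (a ^ (rδ + γ * rβ - β * rx).val * a ^ (0 : ZMod p).val) *
        (b ^ (-rx).val * b ^ (0 : ZMod p).val) := by
        simp [ZMod.val_zero]
    _ = _ := by
        rw [← zpadd a ha, ← zpadd b hb,
          show rδ + γ * rβ - β * rx + 0 =
            (rδ + c * (β * x - y) + γ * (rβ + c * β) - β * (rx + c * x)) +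
              -((γ * β - y) * c) by ring,
          show -rx + 0 = -(rx + c * x) + x * c by ring,
          zpadd a ha, zpadd b hb]
        simp [mul_comm, mul_assoc, mul_left_comm]

end Helpers

private lemma myMapUniform {α β : Type*} [Fintype α] [Nonempty α] [Fintype β] [Nonempty β]
    (f : α ≃ β) :
    PMF.map f (PMF.uniformOfFintype α) = PMF.uniformOfFintype β := by
  ext b
  rw [PMF.map_apply, PMF.uniformOfFintype_apply, tsum_eq_single (f.symm b)]
  · simp [Fintype.card_congr f]
  · intro a ha
    have : b ≠ f a := fun hba => ha (by simp [hba])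
    simp [this]

private lemma myDlogBij {p : ℕ} [Fact p.Prime] {G1 : Type*} [CommGroup G1] [Fintype G1]
    (hcard : Fintype.card G1 = p) (h : G1) (hh : h ≠ 1) :
    Function.Bijective (fun n : ZMod p => h ^ n.val) := by
  haveI : NeZero p := ⟨(Fact.out : p.Prime).ne_zero⟩
  have hord : orderOf h = p := by
    have hdvd : orderOf h ∣ p := hcard ▸ orderOf_dvd_card
    rcases (Fact.out : p.Prime).eq_one_or_self_of_dvd _ hdvd with h1 | h1
    · exact absurd (orderOf_eq_one_iff.mp h1) hh
    · exact h1
  refine (Fintype.bijective_iff_injective_and_card _).2 ⟨?_, by simp [ZMod.card, hcard]⟩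
  intro m n hmn
  have hmeq := pow_eq_pow_iff_modEq.mp hmn
  rw [hord] at hmeq
  have hv : m.val = n.val := by
    have h2 : m.val % p = n.val % p := hmeq
    rwa [Nat.mod_eq_of_lt (ZMod.val_lt m), Nat.mod_eq_of_lt (ZMod.val_lt n)] at h2
  exact ZMod.val_injective p hv

section PairLemmas
variable {G1 G2 GT : Type*} [CommGroup G1] [CommGroup G2] [CommGroup GT]
  (e : G1 → G2 → GT)

private lemma myE1r (hbr : ∀ (a : G1) (b b' : G2), e a (b * b') = e a b * e a b')
    (a : G1) : e a 1 = 1 := by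
  have := hbr a 1 1
  rw [mul_one] at this
  exact (left_eq_mul.mp this)

private lemma myE1l (hbl : ∀ (a a' : G1) (b : G2), e (a * a') b = e a b * e a' b)
    (b : G2) : e 1 b = 1 := by
  have := hbl 1 1 b
  rw [mul_one] at this
  exact (left_eq_mul.mp this)

private lemma myEpowR (hbr : ∀ (a : G1) (b b' : G2), e a (b * b') = e a b * e a b')
    (a : G1) (b : G2) (n : ℕ) : e a (b ^ n) = e a b ^ n := by
  induction n with
  | zero => simpa using myE1r e hbr a
  | succ k ih => rw [pow_succ, hbr, ih, pow_succ]

private lemma myEpowL (hbl : ∀ (a a' : G1) (b : G2), e (a * a') b = e a b * e a' b)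
    (a : G1) (b : G2) (n : ℕ) : e (a ^ n) b = e a b ^ n := by
  induction n with
  | zero => simpa using myE1l e hbl b
  | succ k ih => rw [pow_succ, hbl, ih, pow_succ]

end PairLemmas

/-- Perfect honest-verifier zero knowledge of the underlying
3-move protocol of the open-free group signature scheme: the distribution of
real transcripts `(T, R, c, s_x, s_δ, s_β)` (over uniformly random
`β, r_x, r_δ, r_β, c`) equals the distribution of simulated transcripts
(over uniformly random `T, c, s_x, s_δ, s_β`). -/
theorem openFreeGS_perfect_HVZK
    (p : ℕ) [hp : Fact p.Prime]
    (G1 : Type*) [CommGroup G1] [Fintype G1]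
    (hcard : Fintype.card G1 = p)
    (h : G1) (hh : h ≠ 1)
    (G2 GT : Type*) [CommGroup G2] [CommGroup GT]
    (hexp2 : ∀ a : G2, a ^ p = 1)
    (hexpT : ∀ a : GT, a ^ p = 1)
    (e : G1 → G2 → GT)
    (hbl : ∀ (a a' : G1) (b : G2), e (a * a') b = e a b * e a' b)
    (hbr : ∀ (a : G1) (b b' : G2), e a (b * b') = e a b * e a b')
    (g1 A : G1) (g2 : G2) (γ x y : ZMod p)
    (W : G2) (hW : W = g2 ^ γ.val)
    (hA : A ^ (γ + x).val = g1 * (h ^ y.val)⁻¹) :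
    PMF.map
        (fun t : ZMod p × ZMod p × ZMod p × ZMod p × ZMod p =>
          let β := t.1; let rx := t.2.1; let rδ := t.2.2.1
          let rβ := t.2.2.2.1; let c := t.2.2.2.2
          let T := A * h ^ β.val
          let δ := β * x - y
          let R := e h g2 ^ rδ.val * e h W ^ rβ.val * (e T g2 ^ rx.val)⁻¹
          (T, R, c, rx + c * x, rδ + c * δ, rβ + c * β))
        (PMF.uniformOfFintype (ZMod p × ZMod p × ZMod p × ZMod p × ZMod p)) =
      PMF.map
        (fun t : G1 × ZMod p × ZMod p × ZMod p × ZMod p =>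
          let T := t.1; let c := t.2.1; let sx := t.2.2.1
          let sδ := t.2.2.2.1; let sβ := t.2.2.2.2
          let R' := e h g2 ^ sδ.val * e h W ^ sβ.val * (e T g2 ^ sx.val)⁻¹ *
            ((e T W * (e g1 g2)⁻¹) ^ c.val)⁻¹
          (T, R', c, sx, sδ, sβ))
        (PMF.uniformOfFintype (G1 × ZMod p × ZMod p × ZMod p × ZMod p)) := by
  haveI : NeZero p := ⟨hp.out.ne_zero⟩
  haveI : Nonempty G1 := ⟨1⟩
  subst hW
  -- the discrete-log equivalence n ↦ A * h ^ n.val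
  have hAbij : Function.Bijective (fun n : ZMod p => A * h ^ n.val) :=
    (Group.mulLeft_bijective A).comp (myDlogBij hcard h hh)
  let g : ZMod p ≃ G1 := Equiv.ofBijective _ hAbij
  have hgsa : ∀ n : ZMod p, g.symm (A * h ^ n.val) = n := fun n => g.symm_apply_apply n
  have hgas : ∀ T : G1, A * h ^ (g.symm T).val = T := fun T => g.apply_symm_apply T
  -- the transcript reparametrization equivalence
  let Φ : (ZMod p × ZMod p × ZMod p × ZMod p × ZMod p) ≃
      (G1 × ZMod p × ZMod p × ZMod p × ZMod p) :=
    { toFun := fun t => (A * h ^ t.1.val, t.2.2.2.2, t.2.1 + t.2.2.2.2 * x,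
        t.2.2.1 + t.2.2.2.2 * (t.1 * x - y), t.2.2.2.1 + t.2.2.2.2 * t.1)
      invFun := fun s => (g.symm s.1, s.2.2.1 - s.2.1 * x,
        s.2.2.2.1 - s.2.1 * (g.symm s.1 * x - y), s.2.2.2.2 - s.2.1 * (g.symm s.1), s.2.1)
      left_inv := by
        rintro ⟨β, rx, rδ, rβ, c⟩
        simp only [hgsa]
        refine Prod.ext rfl (Prod.ext (by ring) (Prod.ext (by ring) (Prod.ext (by ring) rfl)))
      right_inv := by
        rintro ⟨T, c, sx, sδ, sβ⟩
        refine Prod.ext (hgas T) (Prod.ext rfl (Prod.ext (by ring) (Prod.ext (by ring) (by ring)))) }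
  have hfun :
      (fun t : ZMod p × ZMod p × ZMod p × ZMod p × ZMod p =>
          let β := t.1; let rx := t.2.1; let rδ := t.2.2.1
          let rβ := t.2.2.2.1; let c := t.2.2.2.2
          let T := A * h ^ β.val
          let δ := β * x - y
          let R := e h g2 ^ rδ.val * e h (g2 ^ γ.val) ^ rβ.val * (e T g2 ^ rx.val)⁻¹
          (T, R, c, rx + c * x, rδ + c * δ, rβ + c * β)) =
        (fun t : G1 × ZMod p × ZMod p × ZMod p × ZMod p =>
          let T := t.1; let c := t.2.1; let sx := t.2.2.1
          let sδ := t.2.2.2.1; let sβ := t.2.2.2.2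
          let R' := e h g2 ^ sδ.val * e h (g2 ^ γ.val) ^ sβ.val * (e T g2 ^ sx.val)⁻¹ *
            ((e T (g2 ^ γ.val) * (e g1 g2)⁻¹) ^ c.val)⁻¹
          (T, R', c, sx, sδ, sβ)) ∘ ⇑Φ := by
    funext t
    obtain ⟨β, rx, rδ, rβ, c⟩ := t
    simp only [Function.comp_apply, Φ, Equiv.coe_fn_mk]
    refine Prod.ext rfl (Prod.ext ?_ rfl)
    have hhW : e h (g2 ^ γ.val) = e h g2 ^ γ.val := myEpowR e hbr h g2 γ.val
    have hTg2 : e (A * h ^ β.val) g2 = e A g2 * e h g2 ^ β.val := by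
      rw [hbl, myEpowL e hbl]
    have hTW : e (A * h ^ β.val) (g2 ^ γ.val) =
        e A g2 ^ γ.val * (e h g2 ^ γ.val) ^ β.val := by
      rw [hbl, myEpowR e hbr, myEpowL e hbl, hhW]
    have hg1' : g1 = A ^ (γ + x).val * h ^ y.val := by
      rw [hA]
      group
    have hg1 : e g1 g2 = e A g2 ^ (γ + x).val * e h g2 ^ y.val := by
      rw [hg1', hbl, myEpowL e hbl, myEpowL e hbl]
    rw [hhW, hTg2, hTW, hg1]
    exact zpkey (e h g2) (e A g2) (hexpT _) (hexpT _) γ x y β rx rδ rβ c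
  rw [hfun, ← PMF.map_comp, myMapUniform Φ]
end
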